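/- arXiv:2006.16739 — 2 statements merged into one kernel-verified Lean document; each statement's English description precedes it below -/
import Mathlib

section
/- Let S : H₂ →L[ℂ] H₁ be bounded, m ∈ ℝ, λ > 0, and D_m(φ,ψ) = (mφ + Sψ, S*φ - mψ). If φ ∈ ker(S S* - λ) with φ ≠ 0, then the vector Φ = ((m + √(λ+m²))φ, S*φ) is nonzero and satisfies D_m Φ = √(λ+m²)·Φ. -/
/-!
With `r = √(λ + m²)` one has `r² - m² = λ`, so on the pair `((m + r) φ, S* φ)` the first
component of `D_m` gives `m (m + r) φ + S S* φ = (m² + mr + λ) φ = r (m + r) φ`, and the second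
`S* (m + r) φ - m S* φ = r S* φ`. Since `λ > 0` forces `r > |m|`, the factor `m + r` is
positive and the vector is nonzero.
-/

open ContinuousLinearMap MeasureTheory

variable {H₁ H₂ : Type*}
  [NormedAddCommGroup H₁] [InnerProductSpace ℂ H₁] [CompleteSpace H₁]
  [NormedAddCommGroup H₂] [InnerProductSpace ℂ H₂] [CompleteSpace H₂]

local notation "e" => WithLp.equiv 2 (H₁ × H₂)

lemma Real.add_sqrt_add_sq_pos {lam : ℝ} (hlam : 0 < lam) (m : ℝ) :
    0 < m + √(lam + m ^ 2) := by
  have hm : |m| < √(lam + m ^ 2) := Real.lt_sqrt_of_sq_lt (by rw [sq_abs]; linarith)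
  linarith [neg_abs_le m]

section BlockEigenvector

variable {𝕜 V W F : Type*} [CommRing 𝕜] [AddCommGroup V] [Module 𝕜 V] [AddCommGroup W] [Module 𝕜 W]

lemma smul_add_smul_eq_of_sq_eq {m r lam : 𝕜} (hr : r ^ 2 = lam + m ^ 2) (φ : V) :
    m • ((m + r) • φ) + lam • φ = r • ((m + r) • φ) := by
  rw [smul_smul, smul_smul, ← add_smul]
  congr 1
  linear_combination -hr

lemma map_smul_sub_smul_eq [FunLike F V W] [LinearMapClass F 𝕜 V W] (U : F) (m r : 𝕜) (φ : V) :
    U ((m + r) • φ) - m • U φ = r • U φ := by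
  rw [map_smul, add_smul, add_sub_cancel_left]

end BlockEigenvector

theorem eigvec_plus (S : H₂ →L[ℂ] H₁) (m : ℝ) (lam : ℝ) (hlam : 0 < lam)
    (D : WithLp 2 (H₁ × H₂) →L[ℂ] WithLp 2 (H₁ × H₂))
    (hD : ∀ (φ : H₁) (ψ : H₂), D ((e).symm (φ, ψ)) =
      (e).symm ((m : ℂ) • φ + S ψ, (adjoint S) φ - (m : ℂ) • ψ))
    (φ : H₁) (hφ : φ ≠ 0) (hker : S ((adjoint S) φ) = (lam : ℂ) • φ) :
    (e).symm ((((m : ℂ) + (Real.sqrt (lam + m ^ 2) : ℂ))) • φ, (adjoint S) φ) ≠ 0 ∧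
    D ((e).symm ((((m : ℂ) + (Real.sqrt (lam + m ^ 2) : ℂ))) • φ, (adjoint S) φ)) =
      (Real.sqrt (lam + m ^ 2) : ℂ) •
        (e).symm ((((m : ℂ) + (Real.sqrt (lam + m ^ 2) : ℂ))) • φ, (adjoint S) φ) := by
  set r := √(lam + m ^ 2)
  have hmr : ((m : ℂ) + r) ≠ 0 := by
    exact_mod_cast (Real.add_sqrt_add_sq_pos hlam m).ne'
  have hr : (r : ℂ) ^ 2 = lam + m ^ 2 := by
    exact_mod_cast Real.sq_sqrt (by positivity : 0 ≤ lam + m ^ 2)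
  refine ⟨fun h => hφ ?_, ?_⟩
  · have hfst := congrArg (fun x => (e x).1) h
    exact (smul_eq_zero.mp hfst).resolve_left hmr
  · rw [hD, hker, smul_add_smul_eq_of_sq_eq hr, map_smul_sub_smul_eq]
    rfl
end

section
/- Let S : H₂ →L[ℂ] H₁ be bounded, m ∈ ℝ, λ > 0. Then dim ker(D_m - √(λ+m²)) = dim ker(S S* - λ) and dim ker(D_m + √(λ+m²)) = dim ker(S* S - λ), where D_m(φ,ψ) = (mφ + Sψ, S*φ - mψ) on H₁ × H₂. -/
/-!
With `r = √(λ + m²)`, the operators `D_m ∓ r` are block operators `!![a, S; S*, d]` with scalar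
diagonal `a = m ∓ r`, `d = -m ∓ r` and `a * d = r² - m² = λ`. For such a block operator with
`d ≠ 0`, `(φ, ψ)` lies in the kernel iff `ψ = -d⁻¹ S* φ` and `(S S* - a d) φ = 0` (a Schur
complement), so `φ ↦ (φ, -d⁻¹ S* φ)` identifies `ker (S S* - λ)` with `ker (D_m - r)`; when
`a ≠ 0` the same argument with the two components swapped identifies `ker (S* S - λ)` with
`ker (D_m + r)`. Both `d = -(m + r)` and `a = m + r` are nonzero because `r² > m²`.
-/

namespace LinearEquiv

variable {R M N : Type*} [CommSemiring R] [AddCommMonoid M] [Module R M] [AddCommMonoid N]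
  [Module R N]

theorem ker_conj (L : M ≃ₗ[R] N) (f : Module.End R M) :
    LinearMap.ker (L.conj f) = (LinearMap.ker f).map (L : M →ₗ[R] N) := by
  rw [conj_apply, LinearMap.ker_comp, LinearEquiv.ker_comp, Submodule.comap_equiv_eq_map_symm,
    symm_symm]

noncomputable def kerConjEquiv (L : M ≃ₗ[R] N) (f : Module.End R M) :
    LinearMap.ker f ≃ₗ[R] LinearMap.ker (L.conj f) :=
  L.ofSubmodules _ _ (L.ker_conj f).symm

end LinearEquiv

namespace LinearMap

variable {K V₁ V₂ : Type*} [Field K] [AddCommGroup V₁] [Module K V₁] [AddCommGroup V₂]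
  [Module K V₂]

def blockMap (a : K) (A : V₂ →ₗ[K] V₁) (B : V₁ →ₗ[K] V₂) (d : K) : Module.End K (V₁ × V₂) :=
  ((a • id).coprod A).prod (B.coprod (d • id))

@[simp]
theorem blockMap_apply (a : K) (A : V₂ →ₗ[K] V₁) (B : V₁ →ₗ[K] V₂) (d : K) (p : V₁ × V₂) :
    blockMap a A B d p = (a • p.1 + A p.2, B p.1 + d • p.2) := rfl

theorem blockMap_sub_smul_id (a : K) (A : V₂ →ₗ[K] V₁) (B : V₁ →ₗ[K] V₂) (d c : K) :
    blockMap a A B d - c • id = blockMap (a - c) A B (d - c) := by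
  refine LinearMap.ext fun p => Prod.ext ?_ ?_ <;> simp only [sub_apply, smul_apply,
    blockMap_apply, id_apply, Prod.fst_sub, Prod.snd_sub, Prod.smul_fst, Prod.smul_snd, sub_smul] <;>
    abel

theorem prodComm_conj_blockMap (a : K) (A : V₂ →ₗ[K] V₁) (B : V₁ →ₗ[K] V₂) (d : K) :
    (LinearEquiv.prodComm K V₁ V₂).conj (blockMap a A B d) = blockMap d B A a := by
  refine LinearMap.ext fun p => Prod.ext ?_ ?_ <;> simp [add_comm]

variable {a d : K} {A : V₂ →ₗ[K] V₁} {B : V₁ →ₗ[K] V₂}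

theorem mem_ker_blockMap_iff_of_ne_zero_right (hd : d ≠ 0) {p : V₁ × V₂} :
    p ∈ ker (blockMap a A B d) ↔ p.1 ∈ ker (A ∘ₗ B - (a * d) • id) ∧ p.2 = -d⁻¹ • B p.1 := by
  obtain ⟨φ, ψ⟩ := p
  have hψ : B φ + d • ψ = 0 ↔ ψ = -d⁻¹ • B φ := by
    rw [add_eq_zero_iff_eq_neg', neg_smul, ← smul_neg, eq_inv_smul_iff₀ hd]
  simp only [mem_ker, blockMap_apply, Prod.mk_eq_zero, hψ, sub_apply, comp_apply, smul_apply,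
    id_apply]
  refine and_congr_left fun h => ?_
  subst h
  have hscaled : d • (a • φ + A (-d⁻¹ • B φ)) = -(A (B φ) - (a * d) • φ) := by
    rw [map_smul]
    match_scalars <;> field_simp
  rw [← neg_eq_zero (a := A (B φ) - _), ← hscaled, smul_eq_zero, or_iff_right hd]

noncomputable def kerBlockMapEquivOfNeZeroRight (hd : d ≠ 0) :
    ker (A ∘ₗ B - (a * d) • id) ≃ₗ[K] ker (blockMap a A B d) :=
  LinearEquiv.ofLinearMap
    ((id.prod (-d⁻¹ • B)).restrict fun φ hφ =>
      (mem_ker_blockMap_iff_of_ne_zero_right hd).2 ⟨hφ, rfl⟩)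
    ((fst K V₁ V₂).restrict fun p hp => ((mem_ker_blockMap_iff_of_ne_zero_right hd).1 hp).1)
    (by ext ⟨⟨φ, ψ⟩, hp⟩
        · rfl
        · exact ((mem_ker_blockMap_iff_of_ne_zero_right hd).1 hp).2.symm)
    (by ext; rfl)

noncomputable def kerBlockMapEquivOfNeZeroLeft (ha : a ≠ 0) :
    ker (B ∘ₗ A - (a * d) • id) ≃ₗ[K] ker (blockMap a A B d) :=
  (LinearEquiv.ofEq _ _ (by rw [mul_comm])).trans <|
    (kerBlockMapEquivOfNeZeroRight ha).trans <|
      (LinearEquiv.ofEq _ _ (congrArg ker (prodComm_conj_blockMap a A B d).symm)).trans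
        ((LinearEquiv.prodComm K V₁ V₂).kerConjEquiv _).symm

theorem sub_smul_one_eq_conj_blockMap {p : ENNReal} (a d : K) (A : V₂ →ₗ[K] V₁) (B : V₁ →ₗ[K] V₂)
    {D : Module.End K (WithLp p (V₁ × V₂))}
    (hD : ∀ φ ψ, D (WithLp.toLp p (φ, ψ)) = WithLp.toLp p (a • φ + A ψ, B φ + d • ψ)) (c : K) :
    D - c • 1 = (WithLp.linearEquiv p K (V₁ × V₂)).symm.conj (blockMap (a - c) A B (d - c)) := by
  have hblock : D = (WithLp.linearEquiv p K (V₁ × V₂)).symm.conj (blockMap a A B d) := by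
    ext ⟨φ, ψ⟩
    exact hD φ ψ
  rw [hblock, Module.End.one_eq_id, ← (WithLp.linearEquiv p K (V₁ × V₂)).symm.conj_id, ← map_smul,
    ← map_sub, blockMap_sub_smul_id]

end LinearMap

theorem ContinuousLinearMap.toLinearMap_comp_sub_smul_one {𝕜 E F : Type*} [NormedField 𝕜]
    [NormedAddCommGroup E] [NormedSpace 𝕜 E] [NormedAddCommGroup F] [NormedSpace 𝕜 F]
    (A : F →L[𝕜] E) (B : E →L[𝕜] F) (c : 𝕜) :
    ((A ∘L B - c • 1 : E →L[𝕜] E) : Module.End 𝕜 E) = (A : F →ₗ[𝕜] E) ∘ₗ B - c • LinearMap.id := by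
  rw [toLinearMap_sub, toLinearMap_smul, toLinearMap_comp, toLinearMap_one, Module.End.one_eq_id]

open ContinuousLinearMap MeasureTheory

universe u v

variable {H₁ : Type u} {H₂ : Type v}
  [NormedAddCommGroup H₁] [InnerProductSpace ℂ H₁] [CompleteSpace H₁]
  [NormedAddCommGroup H₂] [InnerProductSpace ℂ H₂] [CompleteSpace H₂]

local notation "e" => WithLp.equiv 2 (H₁ × H₂)

theorem dim_ker_eq (S : H₂ →L[ℂ] H₁) (m : ℝ) (lam : ℝ) (hlam : 0 < lam)
    (D : WithLp 2 (H₁ × H₂) →L[ℂ] WithLp 2 (H₁ × H₂))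
    (hD : ∀ (φ : H₁) (ψ : H₂), D ((e).symm (φ, ψ)) =
      (e).symm ((m : ℂ) • φ + S ψ, (adjoint S) φ - (m : ℂ) • ψ)) :
    Module.rank ℂ (LinearMap.ker ((D - (Real.sqrt (lam + m ^ 2) : ℂ) •
        (1 : WithLp 2 (H₁ × H₂) →L[ℂ] WithLp 2 (H₁ × H₂)) : WithLp 2 (H₁ × H₂) →ₗ[ℂ] WithLp 2 (H₁ × H₂)))) =
      Cardinal.lift.{max u v}
        (Module.rank ℂ (LinearMap.ker ((S ∘L adjoint S - (lam : ℂ) • (1 : H₁ →L[ℂ] H₁) : H₁ →L[ℂ] H₁) : H₁ →ₗ[ℂ] H₁))) ∧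
    Module.rank ℂ (LinearMap.ker ((D + (Real.sqrt (lam + m ^ 2) : ℂ) •
        (1 : WithLp 2 (H₁ × H₂) →L[ℂ] WithLp 2 (H₁ × H₂)) : WithLp 2 (H₁ × H₂) →ₗ[ℂ] WithLp 2 (H₁ × H₂)))) =
      Cardinal.lift.{max u v}
        (Module.rank ℂ (LinearMap.ker ((adjoint S ∘L S - (lam : ℂ) • (1 : H₂ →L[ℂ] H₂) : H₂ →L[ℂ] H₂) : H₂ →ₗ[ℂ] H₂))) := by
  set r := √(lam + m ^ 2)
  have hr : r ^ 2 = lam + m ^ 2 := Real.sq_sqrt (by positivity)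
  have hrm : 0 < m + r := by nlinarith [Real.sqrt_nonneg (lam + m ^ 2)]
  have hminus : ((m : ℂ) - r) * (-m - r) = lam := by
    norm_cast; linear_combination hr
  have hplus : ((m : ℂ) - -r) * (-m - -r) = lam := by
    norm_cast; linear_combination hr
  have hblock := LinearMap.sub_smul_one_eq_conj_blockMap (m : ℂ) (-m) (S : H₂ →ₗ[ℂ] H₁)
    (adjoint S) (p := 2) (D := D) fun φ ψ => by simpa [sub_eq_add_neg] using hD φ ψ
  rw [toLinearMap_one, ← sub_neg_eq_add, ← neg_smul, hblock, hblock,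
    toLinearMap_comp_sub_smul_one, toLinearMap_comp_sub_smul_one]
  constructor
  · rw [← hminus, (LinearMap.kerBlockMapEquivOfNeZeroRight ?_).lift_rank_eq, Cardinal.lift_id',
      ((WithLp.linearEquiv 2 ℂ (H₁ × H₂)).symm.kerConjEquiv _).rank_eq]
    exact_mod_cast (by linarith : -m - r < 0).ne
  · rw [← hplus, (LinearMap.kerBlockMapEquivOfNeZeroLeft ?_).lift_rank_eq, Cardinal.lift_id',
      ((WithLp.linearEquiv 2 ℂ (H₁ × H₂)).symm.kerConjEquiv _).rank_eq]
    exact_mod_cast (by linarith : 0 < m - -r).ne'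
end
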